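/- Let k, m₁, m₂ > 0 and θ₁, θ₂ ∈ (0, π/2) with m₁·sin²θ₂·cos θ₁ = m₂·cos θ₂·sin²θ₁. For any ω ∈ ℝ define on the open set Ω = {(x₁,y₁,x₂,y₂) ∈ ℝ⁴ : y₁ > 0, y₂ > 0, (x₁,y₁) ≠ (x₂,y₂)} the augmented potential V_c(x₁,y₁,x₂,y₂) = V(x₁,y₁,x₂,y₂) − (ω²/8)·Σ_{i=1,2} m_i·((x_i−1)² + y_i²)·((x_i+1)² + y_i²)/y_i². Then for every ω ∈ ℝ the point q = (cos θ₁, sin θ₁, −cos θ₂, sin θ₂) is NOT a critical point of V_c, i.e. the Fréchet derivative of V_c at q is nonzero. (Hence there are no relative equilibria with velocity ξ = ω(ξ_e + ξ_p), ω ≠ 0.) -/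

import Mathlib

/-!
Move both bodies along the unit semicircle `x² + y² = 1`, the geodesic with ideal endpoints `±1`,
at the same angular speed: `t ↦ (cos (θ₁ + t), sin (θ₁ + t), -cos (θ₂ + t), sin (θ₂ + t))`.
On that semicircle each generator weight equals `4 mᵢ`, so along the curve `V_c` differs from
`V` by a constant. Writing `P = |z₁ - z₂|²` and `Q = |z₁ - z̄₂|²`, the numerator of `V` is
`(P + Q) / 2`, hence `V² = (k m₁ m₂)² (P + Q)² / (4 P Q)`. Along the curve `Q` is constant while
`P = 2 + 2 cos (θ₁ + θ₂ + 2t)` has derivative `-4 sin (θ₁ + θ₂) ≠ 0`, and `∂/∂P` of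
`(P + Q)² / (P Q)` is `(P² - Q²) / (P² Q)`, which is nonzero because `Q - P = 4 y₁ y₂ > 0`.
So `V_c` has nonzero derivative in the direction tangent to the curve.
-/

open Real Filter Topology

noncomputable section

namespace HyperbolicTwoBody

def distSq (z : ℝ × ℝ × ℝ × ℝ) : ℝ := (z.1 - z.2.2.1) ^ 2 + (z.2.1 - z.2.2.2) ^ 2

def distSqConj (z : ℝ × ℝ × ℝ × ℝ) : ℝ := (z.1 - z.2.2.1) ^ 2 + (z.2.1 + z.2.2.2) ^ 2

def potential (k m₁ m₂ : ℝ) (z : ℝ × ℝ × ℝ × ℝ) : ℝ :=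
  -(k * m₁ * m₂) * ((z.1 - z.2.2.1) ^ 2 + z.2.1 ^ 2 + z.2.2.2 ^ 2) /
    √(distSq z * distSqConj z)

def generatorWeight (m x y : ℝ) : ℝ :=
  m * ((x - 1) ^ 2 + y ^ 2) * ((x + 1) ^ 2 + y ^ 2) / y ^ 2

def augmentedPotential (k m₁ m₂ ω : ℝ) (z : ℝ × ℝ × ℝ × ℝ) : ℝ :=
  potential k m₁ m₂ z -
    ω ^ 2 / 8 * (generatorWeight m₁ z.1 z.2.1 + generatorWeight m₂ z.2.2.1 z.2.2.2)

def configSpace : Set (ℝ × ℝ × ℝ × ℝ) :=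
  {z | 0 < z.2.1 ∧ 0 < z.2.2.2 ∧ (z.1, z.2.1) ≠ (z.2.2.1, z.2.2.2)}

lemma distSqConj_sub_distSq (z : ℝ × ℝ × ℝ × ℝ) :
    distSqConj z - distSq z = 4 * z.2.1 * z.2.2.2 := by
  unfold distSq distSqConj; ring

lemma distSq_pos {z : ℝ × ℝ × ℝ × ℝ} (hz : z ∈ configSpace) : 0 < distSq z := by
  obtain ⟨x₁, y₁, x₂, y₂⟩ := z
  obtain ⟨-, -, hne⟩ := hz
  have : x₁ - x₂ ≠ 0 ∨ y₁ - y₂ ≠ 0 := by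
    by_contra! h
    exact hne (Prod.ext (sub_eq_zero.mp h.1) (sub_eq_zero.mp h.2))
  unfold distSq
  rcases this with h | h <;> positivity

lemma distSq_lt_distSqConj {z : ℝ × ℝ × ℝ × ℝ} (hz : z ∈ configSpace) :
    distSq z < distSqConj z := by
  have := distSqConj_sub_distSq z
  have := mul_pos hz.1 hz.2.1
  linarith

lemma differentiableAt_augmentedPotential (k m₁ m₂ ω : ℝ) {z : ℝ × ℝ × ℝ × ℝ}
    (hz : z ∈ configSpace) : DifferentiableAt ℝ (augmentedPotential k m₁ m₂ ω) z := by
  have hpq : 0 < distSq z * distSqConj z :=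
    mul_pos (distSq_pos hz) ((distSq_pos hz).trans (distSq_lt_distSqConj hz))
  have hpq_ne : distSq z * distSqConj z ≠ 0 := hpq.ne'
  have hsqrt : √(distSq z * distSqConj z) ≠ 0 := (sqrt_pos.mpr hpq).ne'
  have hy₁ : z.2.1 ^ 2 ≠ 0 := pow_ne_zero 2 hz.1.ne'
  have hy₂ : z.2.2.2 ^ 2 ≠ 0 := pow_ne_zero 2 hz.2.1.ne'
  unfold augmentedPotential potential generatorWeight
  unfold distSq distSqConj at *
  fun_prop (disch := assumption)

lemma potential_sq (k m₁ m₂ : ℝ) (z : ℝ × ℝ × ℝ × ℝ) :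
    potential k m₁ m₂ z ^ 2 = (k * m₁ * m₂) ^ 2 / 4 *
      ((distSq z + distSqConj z) ^ 2 / (distSq z * distSqConj z)) := by
  have hnum : (z.1 - z.2.2.1) ^ 2 + z.2.1 ^ 2 + z.2.2.2 ^ 2 = (distSq z + distSqConj z) / 2 := by
    unfold distSq distSqConj; ring
  have hprod : 0 ≤ distSq z * distSqConj z := by unfold distSq distSqConj; positivity
  rw [potential, hnum, div_pow, sq_sqrt hprod]
  ring

lemma generatorWeight_eq_of_sq_add_sq {x y : ℝ} (m : ℝ) (h : x ^ 2 + y ^ 2 = 1) (hy : y ≠ 0) :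
    generatorWeight m x y = 4 * m := by
  rw [generatorWeight, div_eq_iff (pow_ne_zero 2 hy)]
  linear_combination (m * (x ^ 2 + y ^ 2 - 1)) * h

def circleCurve (θ₁ θ₂ t : ℝ) : ℝ × ℝ × ℝ × ℝ :=
  (cos (θ₁ + t), sin (θ₁ + t), -cos (θ₂ + t), sin (θ₂ + t))

lemma hasDerivAt_circleCurve (θ₁ θ₂ t : ℝ) :
    HasDerivAt (fun s ↦ circleCurve θ₁ θ₂ s)
      (-sin (θ₁ + t), cos (θ₁ + t), sin (θ₂ + t), cos (θ₂ + t)) t := by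
  have h₁ := (hasDerivAt_id t).const_add θ₁
  have h₂ := (hasDerivAt_id t).const_add θ₂
  simp only [id] at h₁ h₂
  simp only [circleCurve]
  simpa using h₁.cos.prodMk (h₁.sin.prodMk (h₂.cos.neg.prodMk h₂.sin))

lemma distSq_circleCurve (θ₁ θ₂ t : ℝ) :
    distSq (circleCurve θ₁ θ₂ t) = 2 + 2 * cos (θ₁ + θ₂ + 2 * t) := by
  rw [distSq, circleCurve, show θ₁ + θ₂ + 2 * t = (θ₁ + t) + (θ₂ + t) by ring, cos_add (θ₁ + t)]
  linear_combination sin_sq_add_cos_sq (θ₁ + t) + sin_sq_add_cos_sq (θ₂ + t)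

lemma distSqConj_circleCurve (θ₁ θ₂ t : ℝ) :
    distSqConj (circleCurve θ₁ θ₂ t) = 2 + 2 * cos (θ₁ - θ₂) := by
  rw [distSqConj, circleCurve, show θ₁ - θ₂ = (θ₁ + t) - (θ₂ + t) by ring, cos_sub (θ₁ + t)]
  linear_combination sin_sq_add_cos_sq (θ₁ + t) + sin_sq_add_cos_sq (θ₂ + t)

lemma potential_circleCurve_eventuallyEq_augmentedPotential (k m₁ m₂ ω : ℝ) {θ₁ θ₂ : ℝ}
    (h₁ : sin θ₁ ≠ 0) (h₂ : sin θ₂ ≠ 0) :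
    (fun t ↦ potential k m₁ m₂ (circleCurve θ₁ θ₂ t)) =ᶠ[𝓝 0]
      fun t ↦ augmentedPotential k m₁ m₂ ω (circleCurve θ₁ θ₂ t) + ω ^ 2 / 2 * (m₁ + m₂) := by
  have hsin (θ : ℝ) (h : sin θ ≠ 0) : ∀ᶠ t in 𝓝 (0 : ℝ), sin (θ + t) ≠ 0 :=
    (continuous_sin.comp (continuous_const_add θ)).continuousAt.eventually_ne (by simpa using h)
  filter_upwards [hsin θ₁ h₁, hsin θ₂ h₂] with t ht₁ ht₂
  rw [augmentedPotential, circleCurve,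
    generatorWeight_eq_of_sq_add_sq m₁ (cos_sq_add_sin_sq _) ht₁,
    generatorWeight_eq_of_sq_add_sq m₂ (by rw [neg_sq, cos_sq_add_sin_sq]) ht₂]
  ring

lemma hasDerivAt_add_sq_div_mul {p q : ℝ} (hp : p ≠ 0) (hq : q ≠ 0) :
    HasDerivAt (fun p ↦ (p + q) ^ 2 / (p * q)) ((p ^ 2 - q ^ 2) / (p ^ 2 * q)) p := by
  refine ((((hasDerivAt_id' p).add_const q).fun_pow 2).fun_div ((hasDerivAt_id' p).mul_const q)
    (mul_ne_zero hp hq)).congr_deriv ?_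
  field_simp
  ring

lemma circleCurve_zero_mem_configSpace {θ₁ θ₂ : ℝ} (h₁ : 0 < sin θ₁) (h₂ : 0 < sin θ₂)
    (hc : cos θ₁ ≠ -cos θ₂) : circleCurve θ₁ θ₂ 0 ∈ configSpace := by
  refine ⟨by simpa [circleCurve], by simpa [circleCurve], fun h ↦ hc ?_⟩
  simpa [circleCurve] using congrArg Prod.fst h

lemma hasDerivAt_potential_circleCurve_sq (k m₁ m₂ θ₁ θ₂ : ℝ)
    (hp : distSq (circleCurve θ₁ θ₂ 0) ≠ 0) (hq : distSqConj (circleCurve θ₁ θ₂ 0) ≠ 0) :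
    HasDerivAt (fun t ↦ potential k m₁ m₂ (circleCurve θ₁ θ₂ t) ^ 2)
      ((k * m₁ * m₂) ^ 2 / 4 *
        ((distSq (circleCurve θ₁ θ₂ 0) ^ 2 - distSqConj (circleCurve θ₁ θ₂ 0) ^ 2) /
          (distSq (circleCurve θ₁ θ₂ 0) ^ 2 * distSqConj (circleCurve θ₁ θ₂ 0)) *
        (-4 * sin (θ₁ + θ₂)))) 0 := by
  simp only [potential_sq, distSqConj_circleCurve] at hq ⊢
  have hdist : HasDerivAt (fun t ↦ distSq (circleCurve θ₁ θ₂ t)) (-4 * sin (θ₁ + θ₂)) 0 := by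
    simp only [distSq_circleCurve]
    refine ((((hasDerivAt_id' (0 : ℝ)).const_mul 2).const_add (θ₁ + θ₂)).cos.const_mul 2
      |>.const_add 2).congr_deriv ?_
    simp only [mul_zero, add_zero, mul_one]
    ring
  exact ((hasDerivAt_add_sq_div_mul hp hq).comp 0 hdist).const_mul _

lemma not_hasDerivAt_potential_circleCurve_sq_zero {k m₁ m₂ θ₁ θ₂ : ℝ} (hk : k ≠ 0)
    (hm₁ : m₁ ≠ 0) (hm₂ : m₂ ≠ 0) (hz : circleCurve θ₁ θ₂ 0 ∈ configSpace)
    (hs : sin (θ₁ + θ₂) ≠ 0) :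
    ¬HasDerivAt (fun t ↦ potential k m₁ m₂ (circleCurve θ₁ θ₂ t) ^ 2) 0 0 := by
  set P := distSq (circleCurve θ₁ θ₂ 0)
  set Q := distSqConj (circleCurve θ₁ θ₂ 0)
  have hP : 0 < P := distSq_pos hz
  have hPQ : P < Q := distSq_lt_distSqConj hz
  have hP_ne_Q : P ^ 2 - Q ^ 2 ≠ 0 := by nlinarith
  intro h
  have hderiv := (hasDerivAt_potential_circleCurve_sq k m₁ m₂ θ₁ θ₂ hP.ne' (hP.trans hPQ).ne').unique h
  refine mul_ne_zero (by positivity) (mul_ne_zero ?_ (by simpa using hs)) hderiv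
  exact div_ne_zero hP_ne_Q (mul_ne_zero (pow_ne_zero 2 hP.ne') (hP.trans hPQ).ne')

end HyperbolicTwoBody

end

open HyperbolicTwoBody

theorem no_relative_equilibrium_for_mixed_generator_general
    (k m₁ m₂ θ₁ θ₂ ω : ℝ) (hk : 0 < k) (hm₁ : 0 < m₁) (hm₂ : 0 < m₂)
    (hθ₁ : θ₁ ∈ Set.Ioo 0 (π / 2)) (hθ₂ : θ₂ ∈ Set.Ioo 0 (π / 2))
    (V Vc : ℝ × ℝ × ℝ × ℝ → ℝ)
    (hV : ∀ x₁ y₁ x₂ y₂ : ℝ, V (x₁, y₁, x₂, y₂) =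
      -(k * m₁ * m₂) * ((x₁ - x₂) ^ 2 + y₁ ^ 2 + y₂ ^ 2) /
        Real.sqrt (((x₁ - x₂) ^ 2 + (y₁ - y₂) ^ 2) * ((x₁ - x₂) ^ 2 + (y₁ + y₂) ^ 2)))
    (hVc : ∀ x₁ y₁ x₂ y₂ : ℝ, Vc (x₁, y₁, x₂, y₂) = V (x₁, y₁, x₂, y₂) -
      ω ^ 2 / 8 * (m₁ * ((x₁ - 1) ^ 2 + y₁ ^ 2) * ((x₁ + 1) ^ 2 + y₁ ^ 2) / y₁ ^ 2 +
        m₂ * ((x₂ - 1) ^ 2 + y₂ ^ 2) * ((x₂ + 1) ^ 2 + y₂ ^ 2) / y₂ ^ 2)) :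
    fderiv ℝ Vc (Real.cos θ₁, Real.sin θ₁, -Real.cos θ₂, Real.sin θ₂) ≠ 0 := by
  have hVc_eq : Vc = augmentedPotential k m₁ m₂ ω := by
    funext ⟨x₁, y₁, x₂, y₂⟩
    rw [hVc, hV]
    rfl
  obtain ⟨hθ₁₀, hθ₁π⟩ := hθ₁
  obtain ⟨hθ₂₀, hθ₂π⟩ := hθ₂
  have hs₁ : 0 < sin θ₁ := sin_pos_of_pos_of_lt_pi hθ₁₀ (by linarith [pi_pos])
  have hs₂ : 0 < sin θ₂ := sin_pos_of_pos_of_lt_pi hθ₂₀ (by linarith [pi_pos])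
  have hc₁ : 0 < cos θ₁ := cos_pos_of_mem_Ioo ⟨by linarith [pi_pos], hθ₁π⟩
  have hc₂ : 0 < cos θ₂ := cos_pos_of_mem_Ioo ⟨by linarith [pi_pos], hθ₂π⟩
  have hz := circleCurve_zero_mem_configSpace hs₁ hs₂ (by linarith)
  rw [hVc_eq, show (cos θ₁, sin θ₁, -cos θ₂, sin θ₂) = circleCurve θ₁ θ₂ 0 by simp [circleCurve]]
  intro hcrit
  have hVc_crit : HasDerivAt (fun t ↦ augmentedPotential k m₁ m₂ ω (circleCurve θ₁ θ₂ t)) 0 0 := by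
    have := (differentiableAt_augmentedPotential k m₁ m₂ ω hz).hasFDerivAt
      |>.comp_hasDerivAt 0 (hasDerivAt_circleCurve θ₁ θ₂ 0)
    rwa [hcrit, zero_apply] at this
  have hV_crit := (hVc_crit.add_const _).congr_of_eventuallyEq
    (potential_circleCurve_eventuallyEq_augmentedPotential k m₁ m₂ ω hs₁.ne' hs₂.ne')
  refine not_hasDerivAt_potential_circleCurve_sq_zero hk.ne' hm₁.ne' hm₂.ne' hz
    (sin_pos_of_pos_of_lt_pi (by linarith) (by linarith)).ne' ?_
  simpa using hV_crit.fun_pow 2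

/-- For masses `m₁, m₂ > 0`, gravitational constant `k > 0`, angles
`θ₁, θ₂ ∈ (0, π/2)` in canonical configuration (`m₁ sin²θ₂ cos θ₁ = m₂ cos θ₂ sin²θ₁`),
and any `ω ∈ ℝ`, the point `q = (cos θ₁, sin θ₁, -cos θ₂, sin θ₂)` is never a critical
point of the augmented potential
`V_c = V - (ω²/8) Σᵢ mᵢ ((xᵢ-1)² + yᵢ²)((xᵢ+1)² + yᵢ²)/yᵢ²` (for the generator
`ξ = ω(ξ_e + ξ_p)`): the Fréchet derivative of `V_c` at `q` is nonzero. -/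
theorem no_relative_equilibrium_for_mixed_generator
    (k m₁ m₂ θ₁ θ₂ ω : ℝ) (hk : 0 < k) (hm₁ : 0 < m₁) (hm₂ : 0 < m₂)
    (hθ₁ : θ₁ ∈ Set.Ioo 0 (π / 2)) (hθ₂ : θ₂ ∈ Set.Ioo 0 (π / 2))
    (hcan : m₁ * Real.sin θ₂ ^ 2 * Real.cos θ₁ = m₂ * Real.cos θ₂ * Real.sin θ₁ ^ 2)
    (V Vc : ℝ × ℝ × ℝ × ℝ → ℝ)
    (hV : ∀ x₁ y₁ x₂ y₂ : ℝ, V (x₁, y₁, x₂, y₂) =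
      -(k * m₁ * m₂) * ((x₁ - x₂) ^ 2 + y₁ ^ 2 + y₂ ^ 2) /
        Real.sqrt (((x₁ - x₂) ^ 2 + (y₁ - y₂) ^ 2) * ((x₁ - x₂) ^ 2 + (y₁ + y₂) ^ 2)))
    (hVc : ∀ x₁ y₁ x₂ y₂ : ℝ, Vc (x₁, y₁, x₂, y₂) = V (x₁, y₁, x₂, y₂) -
      ω ^ 2 / 8 * (m₁ * ((x₁ - 1) ^ 2 + y₁ ^ 2) * ((x₁ + 1) ^ 2 + y₁ ^ 2) / y₁ ^ 2 +
        m₂ * ((x₂ - 1) ^ 2 + y₂ ^ 2) * ((x₂ + 1) ^ 2 + y₂ ^ 2) / y₂ ^ 2)) :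
    fderiv ℝ Vc (Real.cos θ₁, Real.sin θ₁, -Real.cos θ₂, Real.sin θ₂) ≠ 0 :=
  no_relative_equilibrium_for_mixed_generator_general k m₁ m₂ θ₁ θ₂ ω hk hm₁ hm₂ hθ₁ hθ₂ V Vc hV hVc
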